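/- arXiv:1812.10773 — 2 statements merged into one kernel-verified Lean document; each statement's English description precedes it below -/
import Mathlib

section
/- Let ν ∈ (0,1) and λ, μ > 0, k ≥ 1 an integer. Then it is not true that E_ν(−(λ+kμ)t^ν) = E_ν(−λ t^ν)·E_ν(−kμ t^ν) for all t ≥ 0; i.e., there exists t > 0 with E_ν(−(λ+kμ)t^ν) ≠ E_ν(−λ t^ν)·E_ν(−kμ t^ν). Consequently, if T_A and T_P are random variables with survival functions P(T_A ≥ t) = E_ν(−λ t^ν) and P(T_P ≥ t) = E_ν(−kμ t^ν) and min{T_A,T_P} has survival function E_ν(−(λ+kμ)t^ν) (interarrival, inter-phase and sojourn times of a ν-fractional M/E_k/1 queue), then T_A and T_P are not independent. -/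
/-!
For `ν > 0` the series gives `E_ν(z) = 1 + z / Γ(ν+1) + z² T(z)` with `T` continuous and
`T(0) = 1 / Γ(2ν+1)` (summability by the ratio test, using `y^ν Γ(y+1) ≤ Γ(y+1+ν)` from the
log-convexity of `Γ`). Hence `E_ν(-(a+b)x) - E_ν(-ax) E_ν(-bx) = x² Q(x)` with `Q` continuous and
`Q(0) = ab (2 / Γ(2ν+1) - 1 / Γ(ν+1)²)`, which is positive for `0 < ν < 1` because `log ∘ Γ` is
strictly convex. So for small `t > 0` the survival function of `min T_A T_P` strictly exceeds the
product of the marginal ones, whereas independence makes them equal.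
-/

open MeasureTheory Real Set ProbabilityTheory

/-- The Mittag-Leffler function `E_ν(z) = Σ_{j=0}^∞ z^j / Γ(νj+1)`. -/
noncomputable def mittagLeffler (ν z : ℝ) : ℝ :=
  ∑' j : ℕ, z ^ j / Real.Gamma (ν * j + 1)

open Filter Topology

namespace Real

theorem strictConvexOn_log_Gamma : StrictConvexOn ℝ (Ioi 0) (log ∘ Gamma) := by
  have hshift : ConvexOn ℝ (Ioi 0) fun x => log (Gamma (1 + x)) :=
    (convexOn_log_Gamma.translate_right 1).subset (fun x (hx : 0 < x) => by
      simp only [mem_preimage, mem_Ioi]; linarith) (convex_Ioi 0)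
  refine (hshift.add_strictConvexOn strictConcaveOn_log_Ioi.neg).congr fun x (hx : 0 < x) => ?_
  change log (Gamma (1 + x)) - log x = log (Gamma x)
  rw [add_comm, Gamma_add_one hx.ne', log_mul hx.ne' (Gamma_pos_of_pos hx).ne', add_sub_cancel_left]

theorem rpow_mul_Gamma_add_one_le {y s : ℝ} (hy : 0 < y) (hs : 0 < s) :
    y ^ s * Gamma (y + 1) ≤ Gamma (y + 1 + s) := by
  have hslope := convexOn_log_Gamma.slope_mono_adjacent (x := y) (y := y + 1) (z := y + 1 + s)
    hy (by simp only [mem_Ioi]; positivity) (by linarith) (by linarith)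
  simp only [Function.comp_apply, Gamma_add_one hy.ne',
    log_mul hy.ne' (Gamma_pos_of_pos hy).ne', add_sub_cancel_left, div_one] at hslope
  rw [le_div_iff₀ hs] at hslope
  rw [rpow_def_of_pos hy, ← exp_log (Gamma_pos_of_pos (by positivity : 0 < y + 1 + s)),
    ← exp_log (Gamma_pos_of_pos (by positivity : 0 < y + 1)), Gamma_add_one hy.ne',
    log_mul hy.ne' (Gamma_pos_of_pos hy).ne', ← exp_add]
  exact exp_le_exp.2 (by linarith)

theorem Gamma_two_mul_add_one_lt {ν : ℝ} (hν0 : 0 < ν) (hν1 : ν < 1) :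
    Gamma (2 * ν + 1) < 2 * Gamma (ν + 1) ^ 2 := by
  -- secant slopes of `log ∘ Γ`: `[ν+1, 2] < [ν+1, 3]` and `[3, ν+1] < [3, 2ν+1]`,
  -- with `log Γ 2 = 0` and `log Γ 3 = log 2`
  have hf := strictConvexOn_log_Gamma
  have h₁ := hf.secant_strict_mono (a := ν + 1) (x := 2) (y := 3) (by simp only [mem_Ioi]; linarith)
    (by norm_num) (by norm_num) (by linarith) (by linarith) (by norm_num)
  have h₂ := hf.secant_strict_mono (a := 3) (x := ν + 1) (y := 2 * ν + 1) (by norm_num)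
    (by simp only [mem_Ioi]; linarith) (by simp only [mem_Ioi]; linarith) (by linarith)
    (by linarith) (by linarith)
  have hG3 : Gamma 3 = 2 := by
    rw [show (3:ℝ) = 2 + 1 by norm_num, Gamma_add_one (by norm_num), Gamma_two]; norm_num
  simp only [Function.comp_apply, Gamma_two, hG3, log_one] at h₁ h₂
  rw [div_lt_div_iff₀ (by linarith) (by linarith)] at h₁
  rw [show ν + 1 - 3 = -(2 - ν) by ring, show 2 * ν + 1 - 3 = -(2 - 2 * ν) by ring, div_neg,
    div_neg, neg_lt_neg_iff, div_lt_div_iff₀ (by linarith) (by linarith)] at h₂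
  have hlog : log (Gamma (2 * ν + 1)) < log (2 * Gamma (ν + 1) ^ 2) := by
    rw [log_mul two_ne_zero (by positivity), log_pow, Nat.cast_ofNat]
    by_contra! h
    nlinarith [mul_le_mul_of_nonneg_right h (by linarith : (0:ℝ) ≤ 2 - ν)]
  exact (log_lt_log_iff (Gamma_pos_of_pos (by positivity)) (by positivity)).1 hlog

end Real

noncomputable def mittagLefflerTail (ν : ℝ) (n : ℕ) (z : ℝ) : ℝ :=
  ∑' j : ℕ, z ^ j / Gamma (ν * ↑(j + n) + 1)

section MittagLeffler

variable {ν : ℝ}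

theorem summable_mittagLefflerTail_series (hν : 0 < ν) (n : ℕ) (z : ℝ) :
    Summable fun j : ℕ => z ^ j / Gamma (ν * ↑(j + n) + 1) := by
  refine summable_of_ratio_norm_eventually_le (r := 1 / 2) (by norm_num) ?_
  have hgrowth : Tendsto (fun j : ℕ => (ν * ↑(j + n)) ^ ν) atTop atTop :=
    (tendsto_rpow_atTop hν).comp <| Tendsto.const_mul_atTop hν <|
      tendsto_natCast_atTop_atTop.comp (tendsto_add_atTop_nat n)
  filter_upwards [hgrowth.eventually_ge_atTop (2 * |z|), eventually_ge_atTop 1]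
    with j hj hj1
  have hy : 0 < ν * ↑(j + n) := mul_pos hν (by norm_cast; omega)
  have hΓ : 0 < Gamma (ν * ↑(j + n) + 1) := Gamma_pos_of_pos (by positivity)
  have hstep : (ν * ↑(j + n)) ^ ν * Gamma (ν * ↑(j + n) + 1) ≤ Gamma (ν * ↑(j + 1 + n) + 1) := by
    convert rpow_mul_Gamma_add_one_le hy hν using 2; push_cast; ring
  have hΓ' : 0 < Gamma (ν * ↑(j + 1 + n) + 1) := Gamma_pos_of_pos (by positivity)
  simp only [norm_div, norm_pow, norm_eq_abs, abs_of_pos hΓ, abs_of_pos hΓ']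
  calc |z| ^ (j + 1) / Gamma (ν * ↑(j + 1 + n) + 1)
      ≤ |z| ^ (j + 1) / ((ν * ↑(j + n)) ^ ν * Gamma (ν * ↑(j + n) + 1)) :=
        div_le_div_of_nonneg_left (by positivity) (by positivity) hstep
    _ = |z| / (ν * ↑(j + n)) ^ ν * (|z| ^ j / Gamma (ν * ↑(j + n) + 1)) := by
        rw [pow_succ]; field_simp
    _ ≤ 1 / 2 * (|z| ^ j / Gamma (ν * ↑(j + n) + 1)) := by
        refine mul_le_mul_of_nonneg_right ?_ (by positivity)
        rw [div_le_iff₀ (by positivity)]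
        linarith

theorem mittagLeffler_eq_sum_add_mul_tail (hν : 0 < ν) (n : ℕ) (z : ℝ) :
    mittagLeffler ν z =
      ∑ j ∈ Finset.range n, z ^ j / Gamma (ν * j + 1) + z ^ n * mittagLefflerTail ν n z := by
  have hs : Summable fun j : ℕ => z ^ j / Gamma (ν * j + 1) := by
    simpa using summable_mittagLefflerTail_series hν 0 z
  rw [mittagLeffler, ← hs.sum_add_tsum_nat_add n, mittagLefflerTail, ← tsum_mul_left]
  congr 2 with j
  rw [pow_add]
  ring

theorem mittagLeffler_eq_quadratic_add (hν : 0 < ν) (z : ℝ) :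
    mittagLeffler ν z = 1 + z / Gamma (ν + 1) + z ^ 2 * mittagLefflerTail ν 2 z := by
  simp [mittagLeffler_eq_sum_add_mul_tail hν 2, Finset.sum_range_succ]

theorem continuous_mittagLefflerTail (hν : 0 < ν) (n : ℕ) : Continuous (mittagLefflerTail ν n) := by
  refine continuous_iff_continuousAt.2 fun z₀ => ?_
  set r := |z₀| + 1
  have hon : ContinuousOn (mittagLefflerTail ν n) (Icc (-r) r) := by
    refine continuousOn_tsum (fun j => by fun_prop) (summable_mittagLefflerTail_series hν n r)
      fun j z hz => ?_
    have hΓ : 0 < Gamma (ν * ↑(j + n) + 1) := Gamma_pos_of_pos (by positivity)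
    simp only [norm_div, norm_pow, norm_eq_abs, abs_of_pos hΓ]
    gcongr
    exact abs_le.2 hz
  exact hon.continuousAt (Icc_mem_nhds (by linarith [neg_abs_le z₀]) (by linarith [le_abs_self z₀]))

theorem mittagLefflerTail_apply_zero (n : ℕ) :
    mittagLefflerTail ν n 0 = (Gamma (ν * n + 1))⁻¹ := by
  rw [mittagLefflerTail, tsum_eq_single 0 fun j hj => by simp [hj]]
  simp

theorem continuous_mittagLeffler (hν : 0 < ν) : Continuous (mittagLeffler ν) := by
  convert continuous_mittagLefflerTail hν 0 using 1
  ext z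
  simp [mittagLeffler_eq_sum_add_mul_tail hν 0]

theorem mittagLeffler_zero : mittagLeffler ν 0 = 1 := by
  rw [mittagLeffler, tsum_eq_single 0 fun j hj => by simp [hj]]
  simp

theorem eventually_mul_mittagLeffler_lt (hν0 : 0 < ν) (hν1 : ν < 1) {a b : ℝ}
    (ha : 0 < a) (hb : 0 < b) :
    ∀ᶠ x in 𝓝[>] 0,
      mittagLeffler ν (-a * x) * mittagLeffler ν (-b * x) < mittagLeffler ν (-(a + b) * x) := by
  set G := Gamma (ν + 1)
  set T := mittagLefflerTail ν 2
  have hT : Continuous T := continuous_mittagLefflerTail hν0 2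
  set Q : ℝ → ℝ := fun x => (a + b) ^ 2 * T (-(a + b) * x) - a ^ 2 * T (-a * x)
      - b ^ 2 * T (-b * x) - (-a / G + a ^ 2 * x * T (-a * x)) * (-b / G + b ^ 2 * x * T (-b * x))
  have hdefect : ∀ x, mittagLeffler ν (-(a + b) * x)
      - mittagLeffler ν (-a * x) * mittagLeffler ν (-b * x) = x ^ 2 * Q x := by
    intro x
    simp only [mittagLeffler_eq_quadratic_add hν0, Q]
    ring
  have hQ0 : 0 < Q 0 := by
    have hG : 1 / G ^ 2 < 2 * (Gamma (2 * ν + 1))⁻¹ := by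
      rw [← div_eq_mul_inv, div_lt_div_iff₀ (by positivity) (Gamma_pos_of_pos (by positivity))]
      linarith [Gamma_two_mul_add_one_lt hν0 hν1]
    have hQ0 : Q 0 = a * b * (2 * (Gamma (2 * ν + 1))⁻¹ - 1 / G ^ 2) := by
      simp only [Q, T, mul_zero, mittagLefflerTail_apply_zero, Nat.cast_ofNat, mul_comm ν 2]
      ring
    rw [hQ0]
    exact mul_pos (mul_pos ha hb) (sub_pos.2 hG)
  have hQ : Continuous Q := by fun_prop
  filter_upwards [self_mem_nhdsWithin,
    nhdsWithin_le_nhds (hQ.continuousAt.eventually (lt_mem_nhds hQ0))] with x hx hQx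
  rw [← sub_pos, hdefect]
  exact mul_pos (pow_pos hx 2) hQx

theorem eventually_mittagLeffler_neg_mul_pos (hν : 0 < ν) (c : ℝ) :
    ∀ᶠ x in 𝓝 0, 0 < mittagLeffler ν (-c * x) := by
  have hcont : Continuous fun x => mittagLeffler ν (-c * x) :=
    (continuous_mittagLeffler hν).comp (by fun_prop)
  exact hcont.continuousAt.eventually (lt_mem_nhds (by simp [mittagLeffler_zero]))

theorem exists_mul_mittagLeffler_rpow_lt (hν0 : 0 < ν) (hν1 : ν < 1) {a b : ℝ}
    (ha : 0 < a) (hb : 0 < b) :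
    ∃ t : ℝ, 0 < t ∧ 0 < mittagLeffler ν (-a * t ^ ν) ∧ 0 < mittagLeffler ν (-b * t ^ ν) ∧
      mittagLeffler ν (-a * t ^ ν) * mittagLeffler ν (-b * t ^ ν)
        < mittagLeffler ν (-(a + b) * t ^ ν) := by
  have hpow : Tendsto (fun t : ℝ => t ^ ν) (𝓝[>] 0) (𝓝[>] 0) := by
    refine tendsto_nhdsWithin_of_tendsto_nhds_of_eventually_within _ ?_ ?_
    · simpa [zero_rpow hν0.ne'] using
        (continuousAt_rpow_const 0 ν (Or.inr hν0.le)).tendsto.mono_left nhdsWithin_le_nhds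
    · filter_upwards [self_mem_nhdsWithin] with t ht using rpow_pos_of_pos ht ν
  have hsmall :=
    ((eventually_mittagLeffler_neg_mul_pos hν0 a).filter_mono nhdsWithin_le_nhds).and <|
      ((eventually_mittagLeffler_neg_mul_pos hν0 b).filter_mono nhdsWithin_le_nhds).and <|
        eventually_mul_mittagLeffler_lt hν0 hν1 ha hb
  exact ((hpow.eventually hsmall).and self_mem_nhdsWithin).exists.imp fun t ⟨h, ht⟩ => ⟨ht, h⟩

end MittagLeffler

theorem ProbabilityTheory.IndepFun.measure_le_min_eq_mul {Ω : Type*} [MeasurableSpace Ω]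
    {P : Measure Ω} {X Y : Ω → ℝ} (h : IndepFun X Y P) (t : ℝ) :
    P {ω | t ≤ min (X ω) (Y ω)} = P {ω | t ≤ X ω} * P {ω | t ≤ Y ω} := by
  have hset : {ω | t ≤ min (X ω) (Y ω)} = X ⁻¹' Ici t ∩ Y ⁻¹' Ici t := by
    ext ω
    simp
  rw [hset]
  exact h.measure_inter_preimage_eq_mul _ _ measurableSet_Ici measurableSet_Ici

/-- for ν ∈ (0,1) the multiplicative identity for the Mittag-Leffler function
fails at some t > 0; consequently interarrival and inter-phase times of a ν-fractional
M/E_k/1 queue are not independent. -/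
theorem stmt6 (lam mu ν : ℝ) (k : ℕ) (hl : 0 < lam) (hm : 0 < mu) (hk : 1 ≤ k)
    (hν : ν ∈ Set.Ioo (0:ℝ) 1) :
    (∃ t : ℝ, 0 < t ∧
      mittagLeffler ν (-(lam + k * mu) * t ^ ν)
        ≠ mittagLeffler ν (-lam * t ^ ν) * mittagLeffler ν (-(k * mu) * t ^ ν)) ∧
    (∀ (Ω : Type) (_ : MeasurableSpace Ω) (P : Measure Ω), IsProbabilityMeasure P →
      ∀ (TA TP : Ω → ℝ), Measurable TA → Measurable TP →
      (∀ t, 0 ≤ t → P {ω | t ≤ TA ω} = ENNReal.ofReal (mittagLeffler ν (-lam * t ^ ν))) →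
      (∀ t, 0 ≤ t → P {ω | t ≤ TP ω} = ENNReal.ofReal (mittagLeffler ν (-(k * mu) * t ^ ν))) →
      (∀ t, 0 ≤ t → P {ω | t ≤ min (TA ω) (TP ω)}
          = ENNReal.ofReal (mittagLeffler ν (-(lam + k * mu) * t ^ ν))) →
      ¬ IndepFun TA TP P) := by
  have hkmu : 0 < (k : ℝ) * mu := mul_pos (by exact_mod_cast hk) hm
  obtain ⟨t, ht, hA, hP, hlt⟩ := exists_mul_mittagLeffler_rpow_lt hν.1 hν.2 hl hkmu
  refine ⟨⟨t, ht, hlt.ne'⟩, fun Ω _ P _ TA TP _ _ hTA hTP hmin hindep => hlt.ne ?_⟩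
  have hsurv := hindep.measure_le_min_eq_mul t
  rw [hTA t ht.le, hTP t ht.le, hmin t ht.le, ← ENNReal.ofReal_mul hA.le] at hsurv
  exact ((ENNReal.ofReal_eq_ofReal_iff ((mul_pos hA hP).le.trans hlt.le) (mul_pos hA hP).le).1
    hsurv).symm
end

section
/- Let ν ∈ (0,1) and λ > 0. On a probability space, let X be an exponential random variable with rate λ and Z a nonnegative random variable independent of X satisfying E[e^{−vZ}] = e^{−v^ν} for all v > 0 (i.e., Z is distributed as a ν-stable subordinator at time 1). Then for every t ≥ 0, P(X^{1/ν} Z > t) = E_ν(−λ t^ν); that is, X^{1/ν} Z is a Mittag-Leffler random variable with fractional index ν and parameter λ. -/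
/-!
Conditioning on `Z = z > 0`, the exponential tail of `X` gives
`P(X^{1/ν} z > t) = exp(-λ t^ν z^{-ν})`, so the probability in question is `E[exp(-x Z^{-ν})]`
with `x = λ t^ν`. Writing `z^{-s} = Γ(s)⁻¹ ∫₀^∞ v^{s-1} e^{-vz} dv` and exchanging the integrals
turns the Laplace transform `E[e^{-vZ}] = e^{-v^ν}` into the negative moments
`E[Z^{-s}] = Γ(s/ν + 1) / Γ(s + 1)`, in particular `E[Z^{-νj}] = j! / Γ(νj + 1)`. Expanding the
exponential and integrating term by term yields `Σ_j (-x)^j / Γ(νj + 1) = E_ν(-x)`. The exchange is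
legitimate because the series of absolute values is the Mittag-Leffler series at `x`, which
converges by the ratio test: log-convexity of `Γ` makes `Γ(s + ν) / Γ(s)` grow like `s^ν`.
-/

open MeasureTheory Real Set ProbabilityTheory

open Filter Topology
open scoped Nat

theorem mul_Gamma_mul_rpow_le {s a : ℝ} (hs : 0 < s) (ha₀ : 0 < a) (ha₁ : a < 1) :
    s * Gamma s * (s + a) ^ a ≤ (s + a) * Gamma (s + a) := by
  have hsa : 0 < s + a := by linarith
  -- `s + 1` is the convex combination `a • (s + a) + (1 - a) • (s + a + 1)`
  have hconv := Gamma_mul_add_mul_le_rpow_Gamma_mul_rpow_Gamma hsa (by linarith : 0 < s + a + 1)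
    ha₀ (by linarith : 0 < 1 - a) (by ring)
  rw [show a * (s + a) + (1 - a) * (s + a + 1) = s + 1 by ring, Gamma_add_one hs.ne',
    Gamma_add_one hsa.ne', mul_rpow hsa.le (Gamma_pos_of_pos hsa).le, ← mul_assoc,
    mul_comm (Gamma (s + a) ^ a), mul_assoc, ← rpow_add (Gamma_pos_of_pos hsa),
    add_sub_cancel, rpow_one] at hconv
  calc s * Gamma s * (s + a) ^ a
      ≤ (s + a) ^ (1 - a) * Gamma (s + a) * (s + a) ^ a := by gcongr
    _ = (s + a) * Gamma (s + a) := by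
      rw [mul_right_comm, ← rpow_add hsa, sub_add_cancel, rpow_one]

theorem summable_pow_div_Gamma {ν : ℝ} (hν₀ : 0 < ν) (hν₁ : ν < 1) (z : ℝ) :
    Summable fun j : ℕ => z ^ j / Gamma (ν * j + 1) := by
  refine summable_of_ratio_norm_eventually_le (r := 1 / 2) (by norm_num) ?_
  have hgrowth : Tendsto (fun j : ℕ => (ν * j + 1 + ν) ^ ν) atTop atTop :=
    (tendsto_rpow_atTop hν₀).comp <| tendsto_atTop_add_const_right _ _ <|
      tendsto_atTop_add_const_right _ _ (tendsto_natCast_atTop_atTop.const_mul_atTop hν₀)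
  filter_upwards [hgrowth.eventually_ge_atTop (4 * |z|)] with j hj
  set s : ℝ := ν * j + 1
  have hs : 1 ≤ s := le_add_of_nonneg_left (by positivity)
  have hΓs := Gamma_pos_of_pos (by linarith : 0 < s)
  have hΓsν := Gamma_pos_of_pos (by linarith : 0 < s + ν)
  have hratio : 2 * |z| * Gamma s ≤ Gamma (s + ν) := by
    have hW := mul_Gamma_mul_rpow_le (by linarith : 0 < s) hν₀ hν₁
    have : 2 * s * (2 * |z| * Gamma s) ≤ 2 * s * Gamma (s + ν) :=
      calc 2 * s * (2 * |z| * Gamma s) = 4 * |z| * (s * Gamma s) := by ring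
        _ ≤ (s + ν) ^ ν * (s * Gamma s) := by gcongr
        _ ≤ (s + ν) * Gamma (s + ν) := (mul_comm _ _).trans_le hW
        _ ≤ 2 * s * Gamma (s + ν) := by gcongr; linarith
    exact le_of_mul_le_mul_left this (by positivity)
  rw [show ν * ((j + 1 : ℕ) : ℝ) + 1 = s + ν by push_cast; ring, norm_div, norm_div, norm_pow,
    norm_pow, norm_of_nonneg hΓsν.le, norm_of_nonneg hΓs.le, pow_succ, Real.norm_eq_abs,
    div_le_iff₀ hΓsν]
  calc |z| ^ j * |z| = 1 / 2 * (|z| ^ j / Gamma s) * (2 * |z| * Gamma s) := by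
        field_simp
    _ ≤ 1 / 2 * (|z| ^ j / Gamma s) * Gamma (s + ν) := by gcongr

theorem lintegral_rpow_mul_exp_neg_mul_Ioi {s z : ℝ} (hs : 0 < s) (hz : 0 < z) :
    ∫⁻ v in Ioi 0, ENNReal.ofReal (v ^ (s - 1) * exp (-v * z)) =
      ENNReal.ofReal (Gamma s * z ^ (-s)) := by
  have hint : IntegrableOn (fun v : ℝ => v ^ (s - 1) * exp (-z * v ^ (1 : ℝ))) (Ioi 0) :=
    integrableOn_rpow_mul_exp_neg_mul_rpow (by linarith) one_pos hz
  simp_rw [rpow_one, neg_mul] at hint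
  simp_rw [neg_mul, mul_comm _ z]
  rw [← ofReal_integral_eq_lintegral_ofReal hint, integral_rpow_mul_exp_neg_mul_Ioi hs hz,
    one_div, inv_rpow hz.le, rpow_neg hz.le, mul_comm]
  exact (ae_restrict_iff' measurableSet_Ioi).mpr (.of_forall fun v hv =>
    mul_nonneg (rpow_nonneg (le_of_lt hv) _) (exp_pos _).le)

theorem lintegral_rpow_mul_exp_neg_rpow_Ioi {s ν : ℝ} (hs : 0 < s) (hν : 0 < ν) :
    ∫⁻ v in Ioi 0, ENNReal.ofReal (v ^ (s - 1) * exp (-(v ^ ν))) =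
      ENNReal.ofReal (Gamma (s / ν) / ν) := by
  have hint : IntegrableOn (fun v : ℝ => v ^ (s - 1) * exp (-1 * v ^ ν)) (Ioi 0) :=
    integrableOn_rpow_mul_exp_neg_mul_rpow (by linarith) hν one_pos
  simp_rw [neg_one_mul] at hint
  rw [← ofReal_integral_eq_lintegral_ofReal hint, integral_rpow_mul_exp_neg_rpow hν (by linarith),
    sub_add_cancel, one_div_mul_eq_div]
  exact (ae_restrict_iff' measurableSet_Ioi).mpr (.of_forall fun v hv =>
    mul_nonneg (rpow_nonneg (le_of_lt hv) _) (exp_pos _).le)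

theorem ProbabilityTheory.IndepFun.measure_mem_eq_lintegral {Ω α β : Type*} [MeasurableSpace Ω]
    [MeasurableSpace α] [MeasurableSpace β] {P : Measure Ω} [IsFiniteMeasure P] {X : Ω → α}
    {Y : Ω → β} (hindep : IndepFun X Y P) (hX : Measurable X) (hY : Measurable Y)
    {S : Set (α × β)} (hS : MeasurableSet S) :
    P {ω | (X ω, Y ω) ∈ S} = ∫⁻ ω, P {ω' | (X ω', Y ω) ∈ S} ∂P := by
  calc P {ω | (X ω, Y ω) ∈ S}
      = P.map (fun ω => (X ω, Y ω)) S := (Measure.map_apply (hX.prodMk hY) hS).symm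
    _ = ((P.map X).prod (P.map Y)) S := by
      rw [(indepFun_iff_map_prod_eq_prod_map_map hX.aemeasurable hY.aemeasurable).mp hindep]
    _ = ∫⁻ y, P.map X ((fun x => (x, y)) ⁻¹' S) ∂(P.map Y) := Measure.prod_apply_symm hS
    _ = ∫⁻ ω, P.map X ((fun x => (x, Y ω)) ⁻¹' S) ∂P :=
      lintegral_map (measurable_measure_prodMk_right hS) hY
    _ = ∫⁻ ω, P {ω' | (X ω', Y ω) ∈ S} ∂P := by
      simp_rw [Measure.map_apply hX (measurable_prodMk_right hS)]
      rfl

theorem lt_rpow_inv_mul_iff {ν t x z : ℝ} (hν : 0 < ν) (ht : 0 ≤ t) (hx : 0 ≤ x) (hz : 0 < z) :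
    t < x ^ (1 / ν) * z ↔ t ^ ν * z ^ (-ν) < x := by
  rw [← div_lt_iff₀ hz, one_div, lt_rpow_inv_iff_of_pos (div_nonneg ht hz.le) hx hν,
    div_rpow ht hz.le, rpow_neg hz.le, div_eq_mul_inv]

theorem integrable_exp_neg_mul {Ω : Type*} [MeasurableSpace Ω] {P : Measure Ω}
    [IsFiniteMeasure P] {f : Ω → ℝ} (hf : Measurable f) (hf₀ : ∀ ω, 0 ≤ f ω) {c : ℝ}
    (hc : 0 ≤ c) : Integrable (fun ω => exp (-c * f ω)) P := by
  refine .of_bound (by fun_prop) 1 (.of_forall fun ω => ?_)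
  rw [norm_of_nonneg (exp_pos _).le, exp_le_one_iff, neg_mul, neg_nonpos]
  exact mul_nonneg hc (hf₀ ω)

structure IsOneSidedStable {Ω : Type*} [MeasurableSpace Ω] (P : Measure Ω) (Z : Ω → ℝ) (ν : ℝ) :
    Prop where
  measurable : Measurable Z
  nonneg : ∀ ω, 0 ≤ Z ω
  integral_exp_neg_mul : ∀ v, 0 < v → ∫ ω, exp (-v * Z ω) ∂P = exp (-(v ^ ν))

namespace IsOneSidedStable

variable {Ω : Type*} [MeasurableSpace Ω] {P : Measure Ω} [IsProbabilityMeasure P] {Z : Ω → ℝ}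
  {ν : ℝ}

theorem lintegral_exp_neg_mul (h : IsOneSidedStable P Z ν) {v : ℝ} (hv : 0 < v) :
    ∫⁻ ω, ENNReal.ofReal (exp (-v * Z ω)) ∂P = ENNReal.ofReal (exp (-(v ^ ν))) := by
  rw [← h.integral_exp_neg_mul v hv, ofReal_integral_eq_lintegral_ofReal
    (integrable_exp_neg_mul h.measurable h.nonneg hv.le) (.of_forall fun ω => (exp_pos _).le)]

theorem ae_pos (h : IsOneSidedStable P Z ν) (hν : 0 < ν) : ∀ᵐ ω ∂P, 0 < Z ω := by
  have hbound : ∀ v, 0 < v → P {ω | Z ω = 0} ≤ ENNReal.ofReal (exp (-(v ^ ν))) := by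
    intro v hv
    rw [← h.lintegral_exp_neg_mul hv, ← setLIntegral_one]
    calc ∫⁻ _ in {ω | Z ω = 0}, 1 ∂P
        = ∫⁻ ω in {ω | Z ω = 0}, ENNReal.ofReal (exp (-v * Z ω)) ∂P :=
          setLIntegral_congr_fun (h.measurable (measurableSet_singleton 0)) fun ω hω => by
            simp [show Z ω = 0 from hω]
      _ ≤ ∫⁻ ω, ENNReal.ofReal (exp (-v * Z ω)) ∂P := setLIntegral_le_lintegral _ _
  have hlim : Tendsto (fun v : ℝ => ENNReal.ofReal (exp (-(v ^ ν)))) atTop (𝓝 0) := by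
    simpa using ENNReal.tendsto_ofReal
      (tendsto_exp_atBot.comp (tendsto_neg_atTop_atBot.comp (tendsto_rpow_atTop hν)))
  have hzero : P {ω | Z ω = 0} = 0 :=
    nonpos_iff_eq_zero.mp (ge_of_tendsto hlim ((eventually_gt_atTop 0).mono hbound))
  refine measure_mono_null (fun ω hω => ?_) hzero
  exact le_antisymm (not_lt.mp hω) (h.nonneg ω)

theorem lintegral_rpow_neg (h : IsOneSidedStable P Z ν) (hν : 0 < ν) {s : ℝ} (hs : 0 ≤ s) :
    ∫⁻ ω, ENNReal.ofReal (Z ω ^ (-s)) ∂P =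
      ENNReal.ofReal (Gamma (s / ν + 1) / Gamma (s + 1)) := by
  rcases hs.eq_or_lt with rfl | hs
  · simp
  have hΓ : 0 < Gamma s := Gamma_pos_of_pos hs
  -- `z ^ (-s) = Γ(s)⁻¹ ∫ v ^ (s - 1) e ^ (-v z) dv`; integrating first over `ω` turns the
  -- inner integral into the Laplace transform of `Z`.
  have hrepr : ∀ᵐ ω ∂P, ENNReal.ofReal (Z ω ^ (-s)) = ENNReal.ofReal (Gamma s)⁻¹ *
      ∫⁻ v in Ioi 0, ENNReal.ofReal (v ^ (s - 1) * exp (-v * Z ω)) := by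
    filter_upwards [h.ae_pos hν] with ω hω
    rw [lintegral_rpow_mul_exp_neg_mul_Ioi hs hω, ← ENNReal.ofReal_mul (inv_nonneg.2 hΓ.le),
      inv_mul_cancel_left₀ hΓ.ne']
  have hlaplace : ∀ v ∈ Ioi (0 : ℝ), ∫⁻ ω, ENNReal.ofReal (v ^ (s - 1) * exp (-v * Z ω)) ∂P =
      ENNReal.ofReal (v ^ (s - 1) * exp (-(v ^ ν))) := by
    intro v hv
    have hv₀ : 0 ≤ v ^ (s - 1) := rpow_nonneg (le_of_lt hv) _
    simp_rw [ENNReal.ofReal_mul hv₀]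
    rw [lintegral_const_mul' _ _ ENNReal.ofReal_ne_top, h.lintegral_exp_neg_mul hv]
  have hmeas : Measurable (Function.uncurry fun ω (v : ℝ) =>
      ENNReal.ofReal (v ^ (s - 1) * exp (-v * Z ω))) := by
    have := h.measurable
    fun_prop
  calc ∫⁻ ω, ENNReal.ofReal (Z ω ^ (-s)) ∂P
      = ENNReal.ofReal (Gamma s)⁻¹ *
          ∫⁻ ω, (∫⁻ v in Ioi 0, ENNReal.ofReal (v ^ (s - 1) * exp (-v * Z ω))) ∂P := by
        rw [lintegral_congr_ae hrepr, lintegral_const_mul' _ _ ENNReal.ofReal_ne_top]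
    _ = ENNReal.ofReal (Gamma s)⁻¹ *
          ∫⁻ v in Ioi 0, (∫⁻ ω, ENNReal.ofReal (v ^ (s - 1) * exp (-v * Z ω)) ∂P) := by
        rw [lintegral_lintegral_swap hmeas.aemeasurable]
    _ = ENNReal.ofReal (Gamma (s / ν + 1) / Gamma (s + 1)) := by
        rw [setLIntegral_congr_fun measurableSet_Ioi hlaplace,
          lintegral_rpow_mul_exp_neg_rpow_Ioi hs hν, ← ENNReal.ofReal_mul (inv_nonneg.2 hΓ.le),
          Gamma_add_one (div_pos hs hν).ne', Gamma_add_one hs.ne']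
        congr 1
        field_simp

theorem lintegral_rpow_neg_pow (h : IsOneSidedStable P Z ν) (hν : 0 < ν) (j : ℕ) :
    ∫⁻ ω, ENNReal.ofReal ((Z ω ^ (-ν)) ^ j) ∂P = ENNReal.ofReal (j ! / Gamma (ν * j + 1)) := by
  have hpow : ∀ ω, (Z ω ^ (-ν)) ^ j = Z ω ^ (-(ν * j)) := fun ω => by
    rw [← rpow_natCast, ← rpow_mul (h.nonneg ω), neg_mul]
  simp_rw [hpow]
  rw [h.lintegral_rpow_neg hν (by positivity), mul_div_cancel_left₀ _ hν.ne',
    Gamma_nat_eq_factorial, mul_comm]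

theorem integrable_rpow_neg_pow (h : IsOneSidedStable P Z ν) (hν : 0 < ν) (j : ℕ) :
    Integrable (fun ω => (Z ω ^ (-ν)) ^ j) P := by
  refine ⟨((h.measurable.pow_const _).pow_const _).aestronglyMeasurable,
    (hasFiniteIntegral_iff_ofReal (.of_forall fun ω => ?_)).2 ?_⟩
  · exact pow_nonneg (rpow_nonneg (h.nonneg ω) _) _
  · rw [h.lintegral_rpow_neg_pow hν]
    exact ENNReal.ofReal_lt_top

theorem integral_rpow_neg_pow (h : IsOneSidedStable P Z ν) (hν : 0 < ν) (j : ℕ) :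
    ∫ ω, (Z ω ^ (-ν)) ^ j ∂P = j ! / Gamma (ν * j + 1) := by
  rw [integral_eq_lintegral_of_nonneg_ae
      (.of_forall fun ω => pow_nonneg (rpow_nonneg (h.nonneg ω) _) _)
      (h.integrable_rpow_neg_pow hν j).aestronglyMeasurable,
    h.lintegral_rpow_neg_pow hν, ENNReal.toReal_ofReal]
  have := Gamma_pos_of_pos (by positivity : 0 < ν * j + 1)
  positivity

theorem integral_exp_neg_mul_rpow_neg (h : IsOneSidedStable P Z ν) (hν₀ : 0 < ν) (hν₁ : ν < 1)
    {x : ℝ} (hx : 0 ≤ x) : ∫ ω, exp (-x * Z ω ^ (-ν)) ∂P = mittagLeffler ν (-x) := by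
  have hint : ∀ (y : ℝ) (j : ℕ), Integrable (fun ω => (y * Z ω ^ (-ν)) ^ j / j !) P := by
    intro y j
    simp_rw [mul_pow]
    exact ((h.integrable_rpow_neg_pow hν₀ j).const_mul _).div_const _
  have hterm : ∀ (y : ℝ) (j : ℕ),
      ∫ ω, (y * Z ω ^ (-ν)) ^ j / (j ! : ℝ) ∂P = y ^ j / Gamma (ν * j + 1) := by
    intro y j
    simp_rw [mul_pow]
    rw [integral_div, integral_const_mul, h.integral_rpow_neg_pow hν₀]
    field_simp
  have hnorm : ∀ (j : ℕ) ω,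
      ‖(-x * Z ω ^ (-ν)) ^ j / (j ! : ℝ)‖ = (x * Z ω ^ (-ν)) ^ j / j ! := by
    intro j ω
    rw [norm_div, norm_pow, norm_mul, norm_neg, norm_of_nonneg hx,
      norm_of_nonneg (rpow_nonneg (h.nonneg ω) _), RCLike.norm_natCast]
  have hexp : ∀ ω, ∑' j : ℕ, (-x * Z ω ^ (-ν)) ^ j / j ! = exp (-x * Z ω ^ (-ν)) := fun ω => by
    rw [exp_eq_exp_ℝ]
    exact (NormedSpace.expSeries_div_hasSum_exp _).tsum_eq
  have hsum := hasSum_integral_of_summable_integral_norm (hint (-x)) (by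
    simp_rw [hnorm, hterm x]
    exact summable_pow_div_Gamma hν₀ hν₁ x)
  simp_rw [hterm (-x), hexp] at hsum
  exact hsum.tsum_eq.symm

end IsOneSidedStable

/-- if `X ~ Exp(λ)` and `Z` is an independent ν-stable subordinator at time 1,
then `X^{1/ν} Z` is a Mittag-Leffler random variable with fractional index ν and parameter λ. -/
theorem stmt18 {Ω : Type*} [MeasurableSpace Ω] (P : Measure Ω) [IsProbabilityMeasure P]
    (ν lam : ℝ) (hν : ν ∈ Set.Ioo (0:ℝ) 1) (hl : 0 < lam)
    (X Z : Ω → ℝ) (hX : Measurable X) (hZ : Measurable Z)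
    (hXpos : ∀ ω, 0 ≤ X ω) (hZpos : ∀ ω, 0 ≤ Z ω)
    (hXexp : ∀ t, 0 ≤ t → P {ω | t < X ω} = ENNReal.ofReal (Real.exp (-lam * t)))
    (hZlap : ∀ v, 0 < v → ∫ ω, Real.exp (-v * Z ω) ∂P = Real.exp (-(v ^ ν)))
    (hindep : IndepFun X Z P) :
    ∀ t, 0 ≤ t →
      P {ω | t < X ω ^ (1 / ν) * Z ω} = ENNReal.ofReal (mittagLeffler ν (-lam * t ^ ν)) := by
  have hstable : IsOneSidedStable P Z ν := ⟨hZ, hZpos, hZlap⟩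
  intro t ht
  have hS : MeasurableSet {p : ℝ × ℝ | t < p.1 ^ (1 / ν) * p.2} :=
    measurableSet_lt measurable_const (by fun_prop)
  have htail : ∀ z, 0 < z →
      P {ω | t < X ω ^ (1 / ν) * z} = ENNReal.ofReal (exp (-(lam * t ^ ν) * z ^ (-ν))) := by
    intro z hz
    simp_rw [lt_rpow_inv_mul_iff hν.1 ht (hXpos _) hz]
    rw [hXexp _ (by positivity), neg_mul, neg_mul, mul_assoc]
  calc P {ω | t < X ω ^ (1 / ν) * Z ω}
      = ∫⁻ ω, P {ω' | t < X ω' ^ (1 / ν) * Z ω} ∂P := hindep.measure_mem_eq_lintegral hX hZ hS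
    _ = ∫⁻ ω, ENNReal.ofReal (exp (-(lam * t ^ ν) * Z ω ^ (-ν))) ∂P :=
      lintegral_congr_ae ((hstable.ae_pos hν.1).mono fun ω hω => htail _ hω)
    _ = ENNReal.ofReal (mittagLeffler ν (-lam * t ^ ν)) := by
      rw [← ofReal_integral_eq_lintegral_ofReal
        (integrable_exp_neg_mul (hZ.pow_const _) (fun ω => rpow_nonneg (hZpos ω) _)
          (by positivity)) (.of_forall fun ω => (exp_pos _).le),
        hstable.integral_exp_neg_mul_rpow_neg hν.1 hν.2 (by positivity), neg_mul]
end
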